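/- arXiv:math/0402096 — 3 statements merged into one kernel-verified Lean document; each statement's English description precedes it below -/
import Mathlib

section
/- Let A, B ⊆ ℝ be Lebesgue measurable sets of equal finite positive measure λ₁(A) = λ₁(B) < ∞, contained in a bounded set, and suppose that for every τ ∈ A \ B and every t ∈ B \ A one has |τ| ≤ |t|. Then for every integer N ≥ 1, ∫_A |τ|^(N-1) dτ ≤ ∫_B |t|^(N-1) dt. -/
open MeasureTheory Set

/-! If every point of `A \ B` has smaller weight than every point of `B \ A`, split both
integrals along `A ∩ B`. The two remaining pieces `A \ B` and `B \ A` have the same measure,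
and a constant `c` separating the weights on them gives
`∫_{A \ B} w ≤ c · λ(A \ B) = c · λ(B \ A) ≤ ∫_{B \ A} w`. -/

section SetIntegralComparison

variable {α : Type*} [MeasurableSpace α] {μ : Measure α} {f : α → ℝ} {s t : Set α}

theorem setIntegral_le_setIntegral_of_le_of_le_of_measure_eq (hs : MeasurableSet s)
    (ht : MeasurableSet t) (hst : μ s = μ t) (ht_fin : μ t ≠ ⊤) (hfs : IntegrableOn f s μ)
    (hft : IntegrableOn f t μ) {c : ℝ} (hsc : ∀ x ∈ s, f x ≤ c) (htc : ∀ y ∈ t, c ≤ f y) :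
    ∫ x in s, f x ∂μ ≤ ∫ y in t, f y ∂μ :=
  calc ∫ x in s, f x ∂μ ≤ ∫ _ in s, c ∂μ :=
        setIntegral_mono_on hfs (integrableOn_const (hst ▸ ht_fin)) hs hsc
    _ = ∫ _ in t, c ∂μ := by simp only [setIntegral_const, measureReal_def, hst]
    _ ≤ ∫ y in t, f y ∂μ := setIntegral_mono_on (integrableOn_const ht_fin) hft ht htc

theorem setIntegral_le_setIntegral_of_forall_le_of_measure_eq (hs : MeasurableSet s)
    (ht : MeasurableSet t) (hst : μ s = μ t) (ht_fin : μ t ≠ ⊤) (hfs : IntegrableOn f s μ)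
    (hft : IntegrableOn f t μ) (hle : ∀ x ∈ s, ∀ y ∈ t, f x ≤ f y) :
    ∫ x in s, f x ∂μ ≤ ∫ y in t, f y ∂μ := by
  by_cases hs0 : μ s = 0
  · rw [setIntegral_measure_zero f hs0, setIntegral_measure_zero f (hst ▸ hs0)]
  obtain ⟨x₀, hx₀⟩ := nonempty_of_measure_ne_zero hs0
  have ht_ne : (f '' t).Nonempty := (nonempty_of_measure_ne_zero (hst ▸ hs0)).image f
  have ht_bdd : BddBelow (f '' t) := ⟨f x₀, forall_mem_image.2 (hle x₀ hx₀)⟩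
  exact setIntegral_le_setIntegral_of_le_of_le_of_measure_eq hs ht hst ht_fin hfs hft
    (fun x hx => le_csInf ht_ne (forall_mem_image.2 (hle x hx)))
    (fun y hy => csInf_le ht_bdd (mem_image_of_mem f hy))

theorem setIntegral_le_setIntegral_of_forall_sdiff_le (hs : MeasurableSet s)
    (ht : MeasurableSet t) (hst : μ s = μ t) (hs_fin : μ s ≠ ⊤) (hfs : IntegrableOn f s μ)
    (hft : IntegrableOn f t μ) (hle : ∀ x ∈ s \ t, ∀ y ∈ t \ s, f x ≤ f y) :
    ∫ x in s, f x ∂μ ≤ ∫ y in t, f y ∂μ := by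
  have hsdiff : μ (s \ t) = μ (t \ s) := measure_sdiff_symm hs.nullMeasurableSet
    ht.nullMeasurableSet hst (measure_ne_top_of_subset inter_subset_left hs_fin)
  rw [← integral_inter_add_sdiff ht hfs, ← integral_inter_add_sdiff hs hft, inter_comm t s]
  exact add_le_add le_rfl <| setIntegral_le_setIntegral_of_forall_le_of_measure_eq (hs.diff ht)
    (ht.diff hs) hsdiff (measure_ne_top_of_subset sdiff_subset (hst ▸ hs_fin))
    (hfs.mono_set sdiff_subset) (hft.mono_set sdiff_subset) hle

end SetIntegralComparison

theorem stmt_3_general (N : ℕ) (A B : Set ℝ)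
    (hA : MeasurableSet A) (hB : MeasurableSet B)
    (hbounded : ∃ M : ℝ, A ⊆ Set.Icc (-M) M ∧ B ⊆ Set.Icc (-M) M)
    (heq : volume A = volume B) (hfin : volume A < ⊤)
    (hcomp : ∀ τ ∈ A \ B, ∀ t ∈ B \ A, |τ| ≤ |t|) :
    ∫ τ in A, |τ| ^ (N - 1) ≤ ∫ t in B, |t| ^ (N - 1) := by
  obtain ⟨M, hAM, hBM⟩ := hbounded
  have hint : IntegrableOn (fun t : ℝ => |t| ^ (N - 1)) (Icc (-M) M) :=
    (continuous_abs.pow _).integrableOn_Icc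
  exact setIntegral_le_setIntegral_of_forall_sdiff_le hA hB heq hfin.ne (hint.mono_set hAM)
    (hint.mono_set hBM) fun τ hτ t ht => pow_le_pow_left₀ (abs_nonneg τ) (hcomp τ hτ t ht) _

/-- rearrangement comparison on the line. If `A, B ⊆ ℝ` are measurable,
bounded, of equal finite positive measure, and every point of `A \ B` is closer to the
origin than every point of `B \ A`, then `∫_A |τ|^{N-1} dτ ≤ ∫_B |t|^{N-1} dt`. -/
theorem stmt_3 (N : ℕ) (hN : 1 ≤ N) (A B : Set ℝ)
    (hA : MeasurableSet A) (hB : MeasurableSet B)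
    (hbounded : ∃ M : ℝ, A ⊆ Set.Icc (-M) M ∧ B ⊆ Set.Icc (-M) M)
    (heq : volume A = volume B) (hfin : volume A < ⊤) (hpos : 0 < volume A)
    (hcomp : ∀ τ ∈ A \ B, ∀ t ∈ B \ A, |τ| ≤ |t|) :
    ∫ τ in A, |τ| ^ (N - 1) ≤ ∫ t in B, |t| ^ (N - 1) :=
  stmt_3_general N A B hA hB hbounded heq hfin hcomp
end

section
/- Let B ⊂ ℝ^N be a euclidean ball, a ∈ B a point, and K ⊆ B a Lebesgue measurable set. Then there exists a real line l through a such that λ₁(B ∩ l) > 0 and λ_N(K)/λ_N(B) ≤ 2N · λ₁(K ∩ l)/λ₁(B ∩ l). -/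
open MeasureTheory Measure Set Metric Module
open scoped Pointwise ENNReal RealInnerProductSpace

/-!
Translate so that `a = 0` and write `x = r • ω` in polar coordinates, `ω` on the unit sphere.
If `ρ ω` is the distance from `0` to the boundary of `B` in direction `ω`, then
`μ K ≤ ∫ ρ(ω)^(d-1) λ₁(K ∩ ℝω) dω` and `d μ B = ∫ ρ(ω)^d dω`. Symmetrising under `ω ↦ -ω` with
the weight `q ω = ρ(ω)^(d-1) + ρ(-ω)^(d-1)` and using Chebyshev's inequality
`q ω (ρ(ω) + ρ(-ω)) ≤ 2 (ρ(ω)^d + ρ(-ω)^d)`, where `ρ(ω) + ρ(-ω) = λ₁(B ∩ ℝω)`, gives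
`μ K ∫ q λ₁(B ∩ ℝω) ≤ 4 d μ B μ K ≤ 2 d μ B ∫ q λ₁(K ∩ ℝω)`.
Hence `μ K λ₁(B ∩ ℝω) ≤ 2 d μ B λ₁(K ∩ ℝω)` for some `ω` with `λ₁(B ∩ ℝω) > 0`.
-/

theorem pow_add_pow_mul_add_le {x y : ℝ} (hx : 0 ≤ x) (hy : 0 ≤ y) (n : ℕ) :
    (x ^ n + y ^ n) * (x + y) ≤ 2 * (x ^ (n + 1) + y ^ (n + 1)) := by
  rcases le_total x y with h | h
  · have := mul_add_mul_le_mul_add_mul (pow_le_pow_left₀ hx h n) h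
    rw [pow_succ, pow_succ]
    linarith
  · have := mul_add_mul_le_mul_add_mul (pow_le_pow_left₀ hy h n) h
    rw [pow_succ, pow_succ]
    linarith

theorem exists_mem_le_of_lintegral_le {α : Type*} [MeasurableSpace α] {μ : Measure α}
    {f g : α → ℝ≥0∞} {s : Set α} (hf : AEMeasurable f μ) (hg : ∫⁻ x, g x ∂μ ≠ ∞)
    (hfg : ∫⁻ x, f x ∂μ ≤ ∫⁻ x, g x ∂μ) (hs : μ s ≠ 0) (hgf : ∀ x ∉ s, g x ≤ f x) :
    ∃ x ∈ s, f x ≤ g x := by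
  by_contra! h
  have hle : ∀ x, g x ≤ f x := fun x => by
    by_cases hx : x ∈ s
    exacts [(h x hx).le, hgf x hx]
  exact (lintegral_strict_mono_of_ae_le_of_ae_lt_on hf hg (ae_of_all _ hle) hs
    (ae_of_all _ h)).not_ge hfg

theorem toReal_div_le_mul_toReal_div_of_mul_le {a b c l m : ℝ≥0∞} (hc : c ≠ ∞) (hl : 0 < l)
    (hl' : l ≠ ∞) (hml : m ≤ l) (h : a * l ≤ c * b * m) :
    a.toReal / b.toReal ≤ c.toReal * (m.toReal / l.toReal) := by
  have hm : m ≠ ∞ := ne_top_of_le_ne_top hl' hml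
  rcases eq_or_ne b ∞ with rfl | hb
  · simp only [ENNReal.toReal_top, div_zero]
    positivity
  rcases (ENNReal.toReal_nonneg (a := b)).eq_or_lt with hb0 | hb0
  · rw [← hb0, div_zero]
    positivity
  have hreal := ENNReal.toReal_mono (by finiteness) h
  simp only [ENNReal.toReal_mul] at hreal
  rw [div_le_iff₀ hb0, mul_div_assoc', div_mul_eq_mul_div,
    le_div_iff₀ (ENNReal.toReal_pos hl.ne' hl')]
  linarith

section ExitRadius

variable {E : Type*} [NormedAddCommGroup E] [InnerProductSpace ℝ E] {c w : E} {R : ℝ}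

/-- The larger root `r` of `‖r • w - c‖ ^ 2 = R ^ 2` for a unit vector `w`: the ray `r ↦ r • w`
leaves `closedBall c R` at `r = exitRadius c R w` when `‖c‖ ≤ R`. -/
noncomputable def exitRadius (c : E) (R : ℝ) (w : E) : ℝ :=
  ⟪c, w⟫ + √(⟪c, w⟫ ^ 2 + R ^ 2 - ‖c‖ ^ 2)

@[fun_prop]
theorem continuous_exitRadius (c : E) (R : ℝ) : Continuous (exitRadius c R) := by
  have h : Continuous fun w : E => ⟪c, w⟫ := continuous_const.inner continuous_id
  exact h.add ((h.pow 2).add continuous_const |>.sub continuous_const).sqrt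

theorem abs_inner_le_sqrt_discriminant (hc : ‖c‖ ≤ R) (w : E) :
    |⟪c, w⟫| ≤ √(⟪c, w⟫ ^ 2 + R ^ 2 - ‖c‖ ^ 2) := by
  rw [← Real.sqrt_sq_eq_abs]
  exact Real.sqrt_le_sqrt (by nlinarith [norm_nonneg c])

theorem exitRadius_nonneg (hc : ‖c‖ ≤ R) (w : E) : 0 ≤ exitRadius c R w := by
  have := neg_abs_le ⟪c, w⟫
  have := abs_inner_le_sqrt_discriminant hc w
  unfold exitRadius
  linarith

theorem smul_mem_closedBall_iff_le_exitRadius (hc : ‖c‖ ≤ R) (hw : ‖w‖ = 1) {r : ℝ}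
    (hr : 0 < r) : r • w ∈ closedBall c R ↔ r ≤ exitRadius c R w := by
  have hD := Real.sq_sqrt (show 0 ≤ ⟪c, w⟫ ^ 2 + R ^ 2 - ‖c‖ ^ 2 by
    nlinarith [norm_nonneg c, sq_nonneg ⟪c, w⟫])
  have hDt := abs_le.mp (abs_inner_le_sqrt_discriminant hc w)
  have hnorm : ‖r • w - c‖ ^ 2 = r ^ 2 - 2 * (r * ⟪c, w⟫) + ‖c‖ ^ 2 := by
    rw [norm_sub_sq_real, norm_smul, real_inner_smul_left, hw, real_inner_comm,
      Real.norm_eq_abs, abs_of_pos hr]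
    ring
  have hR : 0 ≤ R := (norm_nonneg c).trans hc
  rw [mem_closedBall_iff_norm, ← sq_le_sq₀ (norm_nonneg _) hR, hnorm, exitRadius]
  constructor <;> intro h <;> nlinarith [Real.sqrt_nonneg (⟪c, w⟫ ^ 2 + R ^ 2 - ‖c‖ ^ 2)]

theorem setOf_smul_mem_closedBall (hc : ‖c‖ ≤ R) (hw : ‖w‖ = 1) :
    {t : ℝ | t • w ∈ closedBall c R} = Icc (-exitRadius c R (-w)) (exitRadius c R w) := by
  have hw' : ‖-w‖ = 1 := by rwa [norm_neg]
  ext t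
  rcases lt_trichotomy t 0 with ht | rfl | ht
  · have := exitRadius_nonneg hc w
    rw [mem_ofPred_eq, ← neg_neg t, neg_smul, ← smul_neg,
      smul_mem_closedBall_iff_le_exitRadius hc hw' (neg_pos.mpr ht), mem_Icc]
    constructor
    · intro h; constructor <;> linarith
    · intro h; linarith [h.1]
  · simp [hc, exitRadius_nonneg hc]
  · have := exitRadius_nonneg hc (-w)
    rw [mem_ofPred_eq, smul_mem_closedBall_iff_le_exitRadius hc hw ht, mem_Icc]
    constructor
    · intro h; constructor <;> linarith
    · exact And.right

theorem volume_setOf_smul_mem_closedBall (hc : ‖c‖ ≤ R) (hw : ‖w‖ = 1) :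
    volume {t : ℝ | t • w ∈ closedBall c R} =
      ENNReal.ofReal (exitRadius c R w) + ENNReal.ofReal (exitRadius c R (-w)) := by
  rw [setOf_smul_mem_closedBall hc hw, Real.volume_Icc, sub_neg_eq_add,
    ENNReal.ofReal_add (exitRadius_nonneg hc w) (exitRadius_nonneg hc (-w))]

noncomputable def chordWeight (c : E) (R : ℝ) (n : ℕ) (w : E) : ℝ≥0∞ :=
  ENNReal.ofReal (exitRadius c R w ^ n) + ENNReal.ofReal (exitRadius c R (-w) ^ n)

theorem chordWeight_ne_zero (hc : ‖c‖ ≤ R) (hw : ‖w‖ = 1) (n : ℕ)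
    (h : 0 < volume {t : ℝ | t • w ∈ closedBall c R}) : chordWeight c R n w ≠ 0 := by
  rw [volume_setOf_smul_mem_closedBall hc hw, pos_iff_ne_zero, Ne, add_eq_zero,
    ENNReal.ofReal_eq_zero, ENNReal.ofReal_eq_zero, not_and_or, not_le, not_le] at h
  rw [chordWeight, Ne, add_eq_zero, ENNReal.ofReal_eq_zero, ENNReal.ofReal_eq_zero, not_and_or,
    not_le, not_le]
  exact h.imp (pow_pos · n) (pow_pos · n)

theorem volume_setOf_smul_neg_mem (S : Set E) (w : E) :
    volume {t : ℝ | t • -w ∈ S} = volume {t : ℝ | t • w ∈ S} := by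
  have : {t : ℝ | t • -w ∈ S} = -{t : ℝ | t • w ∈ S} := by
    ext t
    simp [smul_neg, ← neg_smul]
  rw [this, measure_neg]

theorem setLIntegral_Ioi_pow_mul_indicator_le {S : Set E} (hc : ‖c‖ ≤ R)
    (hS : S ⊆ closedBall c R) (hw : ‖w‖ = 1) (n : ℕ) :
    ∫⁻ r in Ioi (0 : ℝ), ENNReal.ofReal (r ^ n) * S.indicator 1 (r • w) ≤
      ENNReal.ofReal (exitRadius c R w ^ n) * volume {t : ℝ | t • w ∈ S} := by
  calc ∫⁻ r in Ioi (0 : ℝ), ENNReal.ofReal (r ^ n) * S.indicator 1 (r • w)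
      ≤ ∫⁻ r in Ioi (0 : ℝ), ENNReal.ofReal (exitRadius c R w ^ n) *
          {t : ℝ | t • w ∈ S}.indicator 1 r := by
        refine setLIntegral_mono' measurableSet_Ioi fun r (hr : 0 < r) => ?_
        by_cases hrS : r • w ∈ S
        · have hle := (smul_mem_closedBall_iff_le_exitRadius hc hw hr).mp (hS hrS)
          simp only [indicator_of_mem hrS, indicator_of_mem (show r ∈ {t : ℝ | t • w ∈ S} from hrS),
            Pi.one_apply, mul_one]
          exact ENNReal.ofReal_le_ofReal (pow_le_pow_left₀ hr.le hle n)
        · simp [indicator_of_notMem hrS]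
    _ ≤ ∫⁻ r, ENNReal.ofReal (exitRadius c R w ^ n) * {t : ℝ | t • w ∈ S}.indicator 1 r :=
        setLIntegral_le_lintegral _ _
    _ ≤ _ := by
        rw [lintegral_const_mul' _ _ ENNReal.ofReal_ne_top]
        exact mul_le_mul_right (lintegral_indicator_one_le _) _

theorem setLIntegral_Ioi_pow_mul_indicator_closedBall (hc : ‖c‖ ≤ R) (hw : ‖w‖ = 1) (n : ℕ) :
    ∫⁻ r in Ioi (0 : ℝ), ENNReal.ofReal (r ^ n) * (closedBall c R).indicator 1 (r • w) =
      ENNReal.ofReal (exitRadius c R w ^ (n + 1) / (n + 1)) := by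
  have hρ := exitRadius_nonneg hc w
  calc ∫⁻ r in Ioi (0 : ℝ), ENNReal.ofReal (r ^ n) * (closedBall c R).indicator 1 (r • w)
      = ∫⁻ r in Ioi (0 : ℝ), (Ioc 0 (exitRadius c R w)).indicator
          (fun r => ENNReal.ofReal (r ^ n)) r := by
        refine setLIntegral_congr_fun measurableSet_Ioi fun r (hr : 0 < r) => ?_
        by_cases h : r ≤ exitRadius c R w
        · rw [indicator_of_mem ((smul_mem_closedBall_iff_le_exitRadius hc hw hr).mpr h),
            indicator_of_mem (show r ∈ Ioc 0 (exitRadius c R w) from ⟨hr, h⟩), Pi.one_apply,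
            mul_one]
        · rw [indicator_of_notMem (mt (smul_mem_closedBall_iff_le_exitRadius hc hw hr).mp h),
            indicator_of_notMem (fun h' => h h'.2), mul_zero]
    _ = ∫⁻ r in Ioc 0 (exitRadius c R w), ENNReal.ofReal (r ^ n) := by
        rw [lintegral_indicator measurableSet_Ioc, Measure.restrict_restrict measurableSet_Ioc,
          inter_eq_left.mpr Ioc_subset_Ioi_self]
    _ = ENNReal.ofReal (∫ r in (0 : ℝ)..exitRadius c R w, r ^ n) := by
        rw [intervalIntegral.integral_of_le hρ, ofReal_integral_eq_lintegral_ofReal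
          (intervalIntegral.intervalIntegrable_pow n).1]
        filter_upwards [ae_restrict_mem measurableSet_Ioc] with r hr
        exact pow_nonneg hr.1.le n
    _ = _ := by simp [integral_pow]

end ExitRadius

section Measurability

variable {E : Type*} [NormedAddCommGroup E] [InnerProductSpace ℝ E] [MeasurableSpace E]
  [BorelSpace E]

theorem measurable_chordWeight (c : E) (R : ℝ) (n : ℕ) : Measurable (chordWeight c R n) := by
  unfold chordWeight
  fun_prop

theorem measurable_volume_setOf_smul_mem {S : Set E} (hS : MeasurableSet S) :
    Measurable fun w : E => volume {t : ℝ | t • w ∈ S} :=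
  measurable_measure_prodMk_left (s := {p : E × ℝ | p.2 • p.1 ∈ S})
    ((measurable_snd.smul measurable_fst) hS)

end Measurability

section Polar

variable {E : Type*} [NormedAddCommGroup E] [NormedSpace ℝ E] [FiniteDimensional ℝ E]
  [MeasurableSpace E] [BorelSpace E] (μ : Measure E) [μ.IsAddHaarMeasure]

theorem lintegral_eq_lintegral_toSphere [Nontrivial E] {f : E → ℝ≥0∞} (hf : Measurable f) :
    ∫⁻ x, f x ∂μ = ∫⁻ ω : sphere (0 : E) 1,
      (∫⁻ r in Ioi (0 : ℝ), ENNReal.ofReal (r ^ (finrank ℝ E - 1)) * f (r • (ω : E)))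
        ∂μ.toSphere := by
  have hg : Measurable fun p : sphere (0 : E) 1 × Ioi (0 : ℝ) => f ((p.2 : ℝ) • (p.1 : E)) :=
    hf.comp ((measurable_subtype_coe.comp measurable_snd).smul
      (measurable_subtype_coe.comp measurable_fst))
  calc ∫⁻ x, f x ∂μ = ∫⁻ x : ({0}ᶜ : Set E), f x ∂μ.comap (↑) := by
        rw [lintegral_subtype_comap (measurableSet_singleton _).compl, restrict_compl_singleton]
    _ = ∫⁻ p : sphere (0 : E) 1 × Ioi (0 : ℝ), f ((p.2 : ℝ) • (p.1 : E))
          ∂μ.toSphere.prod (volumeIoiPow (finrank ℝ E - 1)) := by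
        rw [← μ.measurePreserving_homeomorphUnitSphereProd.lintegral_comp hg]
        refine lintegral_congr fun x => congrArg f ?_
        exact congrArg Subtype.val ((homeomorphUnitSphereProd E).symm_apply_apply x).symm
    _ = ∫⁻ ω : sphere (0 : E) 1,
          ∫⁻ r : Ioi (0 : ℝ), f ((r : ℝ) • (ω : E)) ∂volumeIoiPow (finrank ℝ E - 1) ∂μ.toSphere :=
        lintegral_prod _ hg.aemeasurable
    _ = _ := by
        refine lintegral_congr fun ω => ?_
        rw [volumeIoiPow, lintegral_withDensity_eq_lintegral_mul _
          (measurable_subtype_coe.pow_const _).ennreal_ofReal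
          (show Measurable fun r : Ioi (0 : ℝ) => f ((r : ℝ) • (ω : E)) from
            hf.comp (measurable_subtype_coe.smul_const _)),
          ← lintegral_subtype_comap measurableSet_Ioi]
        rfl

theorem map_neg_toSphere : μ.toSphere.map Neg.neg = μ.toSphere := by
  have hneg : Measurable (Neg.neg : sphere (0 : E) 1 → sphere (0 : E) 1) :=
    continuous_neg.measurable
  refine Measure.ext fun s hs => ?_
  have himage : ((↑) '' (Neg.neg ⁻¹' s) : Set E) = -((↑) '' s) := by
    ext x
    constructor
    · rintro ⟨ω, hω, rfl⟩
      exact ⟨-ω, hω, by simp⟩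
    · rintro ⟨ω, hω, hx⟩
      exact ⟨-ω, by simpa using hω, by simp [hx]⟩
  rw [Measure.map_apply hneg hs, toSphere_apply' _ (hneg hs), toSphere_apply' _ hs, himage,
    Set.smul_neg, measure_neg]

theorem lintegral_toSphere_comp_neg {F : E → ℝ≥0∞} (hF : Measurable F) :
    ∫⁻ ω : sphere (0 : E) 1, F (-ω) ∂μ.toSphere = ∫⁻ ω : sphere (0 : E) 1, F ω ∂μ.toSphere := by
  conv_rhs => rw [← map_neg_toSphere μ]
  rw [lintegral_map (f := fun ω : sphere (0 : E) 1 => F ω) (hF.comp measurable_subtype_coe)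
    continuous_neg.measurable]
  simp

end Polar

section Slicing

variable {E : Type*} [NormedAddCommGroup E] [InnerProductSpace ℝ E] [FiniteDimensional ℝ E]
  [MeasurableSpace E] [BorelSpace E] [Nontrivial E] (μ : Measure E) [μ.IsAddHaarMeasure]
  {c : E} {R : ℝ}

theorem measure_le_lintegral_toSphere (hc : ‖c‖ ≤ R) {S : Set E} (hS : MeasurableSet S)
    (hSB : S ⊆ closedBall c R) :
    μ S ≤ ∫⁻ ω : sphere (0 : E) 1, ENNReal.ofReal (exitRadius c R ω ^ (finrank ℝ E - 1)) *
      volume {t : ℝ | t • (ω : E) ∈ S} ∂μ.toSphere := by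
  rw [← lintegral_indicator_one hS, lintegral_eq_lintegral_toSphere μ (measurable_one.indicator hS)]
  exact lintegral_mono fun ω =>
    setLIntegral_Ioi_pow_mul_indicator_le hc hSB (mem_sphere_zero_iff_norm.mp ω.2) _

theorem finrank_mul_measure_closedBall (hc : ‖c‖ ≤ R) :
    finrank ℝ E * μ (closedBall c R) =
      ∫⁻ ω : sphere (0 : E) 1, ENNReal.ofReal (exitRadius c R ω ^ finrank ℝ E) ∂μ.toSphere := by
  have hd : finrank ℝ E - 1 + 1 = finrank ℝ E := Nat.sub_add_cancel finrank_pos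
  have hd' : ((finrank ℝ E - 1 : ℕ) : ℝ) + 1 = finrank ℝ E := by exact_mod_cast hd
  rw [← lintegral_indicator_one measurableSet_closedBall,
    lintegral_eq_lintegral_toSphere μ (measurable_one.indicator measurableSet_closedBall),
    ← lintegral_const_mul' _ _ (ENNReal.natCast_ne_top _)]
  refine lintegral_congr fun ω => ?_
  rw [setLIntegral_Ioi_pow_mul_indicator_closedBall hc (mem_sphere_zero_iff_norm.mp ω.2), hd, hd',
    ← ENNReal.ofReal_natCast, ← ENNReal.ofReal_mul (Nat.cast_nonneg _),
    mul_div_cancel₀ _ (Nat.cast_ne_zero.mpr finrank_pos.ne')]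

theorem two_mul_measure_le_lintegral_chordWeight (hc : ‖c‖ ≤ R) {S : Set E}
    (hS : MeasurableSet S) (hSB : S ⊆ closedBall c R) :
    2 * μ S ≤ ∫⁻ ω : sphere (0 : E) 1,
      chordWeight c R (finrank ℝ E - 1) ω * volume {t : ℝ | t • (ω : E) ∈ S} ∂μ.toSphere := by
  set F : E → ℝ≥0∞ := fun x =>
    ENNReal.ofReal (exitRadius c R x ^ (finrank ℝ E - 1)) * volume {t : ℝ | t • x ∈ S}
  have hk := measurable_volume_setOf_smul_mem hS
  have hF : Measurable F := by fun_prop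
  have hneg := lintegral_toSphere_comp_neg μ hF
  simp only [F, volume_setOf_smul_neg_mem] at hneg
  calc 2 * μ S = μ S + μ S := two_mul _
    _ ≤ ∫⁻ ω : sphere (0 : E) 1, F ω ∂μ.toSphere + ∫⁻ ω : sphere (0 : E) 1,
          ENNReal.ofReal (exitRadius c R (-ω) ^ (finrank ℝ E - 1)) *
            volume {t : ℝ | t • (ω : E) ∈ S} ∂μ.toSphere := by
        rw [hneg]
        exact add_le_add (measure_le_lintegral_toSphere μ hc hS hSB)
          (measure_le_lintegral_toSphere μ hc hS hSB)
    _ = _ := by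
        rw [← lintegral_add_left (by fun_prop)]
        simp only [F, chordWeight, add_mul]

theorem lintegral_chordWeight_mul_volume_le (hc : ‖c‖ ≤ R) :
    ∫⁻ ω : sphere (0 : E) 1, chordWeight c R (finrank ℝ E - 1) ω *
        volume {t : ℝ | t • (ω : E) ∈ closedBall c R} ∂μ.toSphere ≤
      2 * (2 * finrank ℝ E * μ (closedBall c R)) := by
  have hd : finrank ℝ E - 1 + 1 = finrank ℝ E := Nat.sub_add_cancel finrank_pos
  set G : E → ℝ≥0∞ := fun x => ENNReal.ofReal (exitRadius c R x ^ finrank ℝ E)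
  have hG : Measurable G := by fun_prop
  have hneg := lintegral_toSphere_comp_neg μ hG
  calc _ ≤ ∫⁻ ω : sphere (0 : E) 1, 2 * (G ω + G (-ω)) ∂μ.toSphere := by
        refine lintegral_mono fun ω => ?_
        have h₁ := exitRadius_nonneg hc (ω : E)
        have h₂ := exitRadius_nonneg hc (-(ω : E))
        rw [volume_setOf_smul_mem_closedBall hc (mem_sphere_zero_iff_norm.mp ω.2), chordWeight,
          ← ENNReal.ofReal_add (pow_nonneg h₁ _) (pow_nonneg h₂ _), ← ENNReal.ofReal_add h₁ h₂,
          ← ENNReal.ofReal_mul (by positivity), ← ENNReal.ofReal_add (pow_nonneg h₁ _)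
            (pow_nonneg h₂ _), ← ENNReal.ofReal_ofNat 2, ← ENNReal.ofReal_mul zero_le_two, ← hd]
        exact ENNReal.ofReal_le_ofReal (pow_add_pow_mul_add_le h₁ h₂ _)
    _ = 2 * (2 * finrank ℝ E * μ (closedBall c R)) := by
        rw [lintegral_const_mul _ (by fun_prop), lintegral_add_left (by fun_prop), hneg,
          ← finrank_mul_measure_closedBall μ hc]
        ring

theorem toSphere_setOf_volume_slice_pos_ne_zero (hR : 0 < R) (hc : ‖c‖ ≤ R) :
    μ.toSphere {ω | 0 < volume {t : ℝ | t • (ω : E) ∈ closedBall c R}} ≠ 0 := by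
  intro h
  have hzero : finrank ℝ E * μ (closedBall c R) = 0 := by
    rw [finrank_mul_measure_closedBall μ hc, lintegral_eq_zero_iff (by fun_prop)]
    filter_upwards [measure_eq_zero_iff_ae_notMem.mp h] with ω hω
    rw [not_lt, nonpos_iff_eq_zero,
      volume_setOf_smul_mem_closedBall hc (mem_sphere_zero_iff_norm.mp ω.2), add_eq_zero,
      ENNReal.ofReal_eq_zero] at hω
    have hρ : exitRadius c R ω = 0 := le_antisymm hω.1 (exitRadius_nonneg hc _)
    simp [hρ, finrank_pos.ne']
  simp [finrank_pos.ne', (measure_closedBall_pos μ c hR).ne'] at hzero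

theorem exists_unit_measure_mul_volume_slice_le (hR : 0 < R) (hc : ‖c‖ ≤ R) {K : Set E}
    (hK : MeasurableSet K) (hKB : K ⊆ closedBall c R) :
    ∃ w : E, ‖w‖ = 1 ∧ 0 < volume {t : ℝ | t • w ∈ closedBall c R} ∧
      μ K * volume {t : ℝ | t • w ∈ closedBall c R} ≤
        2 * finrank ℝ E * μ (closedBall c R) * volume {t : ℝ | t • w ∈ K} := by
  set C := 2 * (finrank ℝ E : ℝ≥0∞) * μ (closedBall c R)
  set q := chordWeight c R (finrank ℝ E - 1)
  set ℓ : E → ℝ≥0∞ := fun w => volume {t : ℝ | t • w ∈ closedBall c R}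
  set k : E → ℝ≥0∞ := fun w => volume {t : ℝ | t • w ∈ K}
  have hkℓ (w : E) : k w ≤ ℓ w := measure_mono fun t ht => hKB ht
  have hC : C ≠ ∞ := ENNReal.mul_ne_top (by finiteness) measure_closedBall_lt_top.ne
  have hqm : Measurable q := measurable_chordWeight c R _
  have hℓm : Measurable ℓ := measurable_volume_setOf_smul_mem measurableSet_closedBall
  have hqℓ := lintegral_chordWeight_mul_volume_le μ hc
  have hqk : ∫⁻ ω : sphere (0 : E) 1, C * (q ω * k ω) ∂μ.toSphere ≠ ∞ := by
    rw [lintegral_const_mul' _ _ hC]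
    refine ENNReal.mul_ne_top hC (ne_top_of_le_ne_top ?_
      ((lintegral_mono fun ω : sphere (0 : E) 1 => mul_le_mul_right (hkℓ ω) _).trans hqℓ))
    finiteness
  have hint : ∫⁻ ω : sphere (0 : E) 1, μ K * (q ω * ℓ ω) ∂μ.toSphere ≤
      ∫⁻ ω : sphere (0 : E) 1, C * (q ω * k ω) ∂μ.toSphere := by
    rw [lintegral_const_mul' _ _ (measure_closedBall_lt_top.trans_le' (measure_mono hKB)).ne,
      lintegral_const_mul' _ _ hC]
    calc μ K * _ ≤ μ K * (2 * C) := mul_le_mul_right hqℓ _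
      _ = C * (2 * μ K) := by ring
      _ ≤ _ := mul_le_mul_right (two_mul_measure_le_lintegral_chordWeight μ hc hK hKB) _
  have hdegenerate (ω : sphere (0 : E) 1) (hω : ¬0 < ℓ ω) :
      C * (q ω * k ω) ≤ μ K * (q ω * ℓ ω) := by
    rw [not_lt, nonpos_iff_eq_zero] at hω
    simp [nonpos_iff_eq_zero.mp (hω ▸ hkℓ ω)]
  obtain ⟨ω, hω, hle⟩ := exists_mem_le_of_lintegral_le (by fun_prop) hqk hint
    (toSphere_setOf_volume_slice_pos_ne_zero μ hR hc) hdegenerate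
  have hqω := chordWeight_ne_zero hc (mem_sphere_zero_iff_norm.mp ω.2) (finrank ℝ E - 1) hω
  refine ⟨ω, mem_sphere_zero_iff_norm.mp ω.2, hω, ?_⟩
  rw [mul_left_comm, mul_left_comm C] at hle
  exact (ENNReal.mul_le_mul_iff_right hqω (by simp [chordWeight])).mp hle

end Slicing

/-- real slicing lemma: for a euclidean ball `B ⊆ ℝ^N`, a point `a ∈ B` and a
measurable `K ⊆ B`, there is a real line `l = {a + t·w : t ∈ ℝ}` through `a` with
`λ₁(B ∩ l) > 0` and `λ_N(K)/λ_N(B) ≤ 2N · λ₁(K ∩ l)/λ₁(B ∩ l)`. The length measure on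
`l` is computed via the arclength parametrization `t ↦ a + t • w`, `‖w‖ = 1`. -/
theorem stmt_5 (N : ℕ) (hN : 1 ≤ N) (x₀ : EuclideanSpace ℝ (Fin N)) (R : ℝ) (hR : 0 < R)
    (a : EuclideanSpace ℝ (Fin N)) (ha : a ∈ Metric.closedBall x₀ R)
    (K : Set (EuclideanSpace ℝ (Fin N))) (hK : MeasurableSet K)
    (hKB : K ⊆ Metric.closedBall x₀ R) :
    ∃ w : EuclideanSpace ℝ (Fin N), ‖w‖ = 1 ∧
      0 < volume {t : ℝ | a + t • w ∈ Metric.closedBall x₀ R} ∧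
      (volume K).toReal / (volume (Metric.closedBall x₀ R)).toReal ≤
        2 * N * ((volume {t : ℝ | a + t • w ∈ K}).toReal /
          (volume {t : ℝ | a + t • w ∈ Metric.closedBall x₀ R}).toReal) := by
  have : Nontrivial (EuclideanSpace ℝ (Fin N)) :=
    Module.nontrivial_of_finrank_pos (R := ℝ) (by rw [finrank_euclideanSpace_fin]; omega)
  have hc : ‖x₀ - a‖ ≤ R := by rwa [← dist_eq_norm, dist_comm]
  have hB : (a + ·) ⁻¹' closedBall x₀ R = closedBall (x₀ - a) R := preimage_add_closedBall x₀ a R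
  obtain ⟨w, hw, hpos, hle⟩ := exists_unit_measure_mul_volume_slice_le volume hR hc
    (hK.preimage (measurable_const_add a)) (hB ▸ preimage_mono hKB)
  rw [← hB, measure_preimage_add, measure_preimage_add, finrank_euclideanSpace_fin] at hle
  rw [← hB] at hpos
  refine ⟨w, hw, hpos, ?_⟩
  have hlim := toReal_div_le_mul_toReal_div_of_mul_le (by finiteness) hpos
    (by rw [hB, volume_setOf_smul_mem_closedBall hc hw]; finiteness)
    (measure_mono fun t ht => hKB ht) hle
  simp only [ENNReal.toReal_mul, ENNReal.toReal_ofNat, ENNReal.toReal_natCast] at hlim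
  exact hlim
end

section
/- Let B be a measurable set of finite positive measure with measure λ, u : B → ℝ integrable, M ∈ ℝ with u ≤ M on B and u_B := (1/λ(B))∫_B u dλ. Suppose λ({x ∈ B : u(x) ≤ M − s})/λ(B) ≤ C·e^(−δs) for all s > 0, with C ≥ 1, δ > 0. Then M − u_B ≤ (1 + log C)/δ. -/
/-!
Pass to the normalized measure `λ[|B]`, a probability measure under which `M − u ≥ 0` has mean
`M − u_B`. By the layer-cake formula this mean is `∫₀^∞ λ[|B]{M − u > t} dt`, and the hypothesis
together with the trivial bound `1` dominates the integrand by `min 1 (C e^{−δt})`. That function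
equals `1` up to `t₀ = log C / δ` and `C e^{−δt}` afterwards, so its integral is
`t₀ + 1/δ = (1 + log C)/δ`.
-/

open MeasureTheory Set Real ProbabilityTheory

theorem integral_le_setIntegral_Ioi_of_meas_lt_le {α : Type*} [MeasurableSpace α]
    {μ : Measure α} {f : α → ℝ} (hf : Integrable f μ) (hf₀ : 0 ≤ᵐ[μ] f) {φ : ℝ → ℝ}
    (hφ : IntegrableOn φ (Ioi 0)) (htail : ∀ t > 0, μ.real {a | t < f a} ≤ φ t) :
    ∫ a, f a ∂μ ≤ ∫ t in Ioi 0, φ t := by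
  have hmeas : Measurable fun t : ℝ ↦ μ.real {a | t < f a} :=
    (Antitone.measurable (f := fun t : ℝ ↦ μ {a | t < f a})
      fun _ _ hst ↦ measure_mono fun _ h ↦ hst.trans_lt h).ennreal_toReal
  have hint : IntegrableOn (fun t ↦ μ.real {a | t < f a}) (Ioi 0) :=
    hφ.mono' hmeas.aestronglyMeasurable <| (ae_restrict_iff' measurableSet_Ioi).2 <|
      .of_forall fun t ht ↦ by rw [norm_of_nonneg measureReal_nonneg]; exact htail t ht
  rw [hf.integral_eq_integral_meas_lt hf₀]
  exact setIntegral_mono_on hint hφ measurableSet_Ioi htail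

theorem integrableOn_Ioi_min_one_mul_exp {C δ : ℝ} (hC : 0 ≤ C) (hδ : 0 < δ) (c : ℝ) :
    IntegrableOn (fun t ↦ min 1 (C * exp (-δ * t))) (Ioi c) :=
  ((integrableOn_exp_mul_Ioi (neg_neg_of_pos hδ) c).const_mul C).mono'
    (by fun_prop) <| .of_forall fun t ↦ by
      rw [norm_of_nonneg (le_min zero_le_one (by positivity))]
      exact min_le_right _ _

theorem integral_Ioi_min_one_mul_exp {C δ : ℝ} (hC : 1 ≤ C) (hδ : 0 < δ) :
    ∫ t in Ioi 0, min 1 (C * exp (-δ * t)) = (1 + log C) / δ := by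
  set t₀ := log C / δ
  have ht₀ : 0 ≤ t₀ := div_nonneg (log_nonneg hC) hδ.le
  -- `t₀` is where `C e^{−δt}` crosses `1`
  have hcross : C * exp (-δ * t₀) = 1 := by
    rw [neg_mul, mul_div_cancel₀ _ hδ.ne', exp_neg, exp_log (by linarith)]
    field_simp
  have hint := integrableOn_Ioi_min_one_mul_exp (C := C) (by linarith) hδ
  have hhead : ∫ t in Ioc 0 t₀, min 1 (C * exp (-δ * t)) = t₀ := by
    rw [setIntegral_congr_fun measurableSet_Ioc (g := fun _ ↦ 1) fun t ht ↦ min_eq_left ?_]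
    · simp [ht₀]
    · rw [← hcross]
      exact mul_le_mul_of_nonneg_left (exp_le_exp.2 (by nlinarith [ht.2])) (by linarith)
  have htail : ∫ t in Ioi t₀, min 1 (C * exp (-δ * t)) = 1 / δ := by
    rw [setIntegral_congr_fun measurableSet_Ioi (g := fun t ↦ C * exp (-δ * t))
      fun t ht ↦ min_eq_right ?_]
    · rw [integral_const_mul, integral_exp_mul_Ioi (neg_neg_of_pos hδ), mul_div_assoc',
        mul_neg, hcross, neg_div_neg_eq]
    · rw [← hcross]
      exact mul_le_mul_of_nonneg_left (exp_le_exp.2 (by nlinarith [mem_Ioi.1 ht])) (by linarith)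
  rw [← Ioc_union_Ioi_eq_Ioi ht₀, setIntegral_union (Ioc_disjoint_Ioi le_rfl) measurableSet_Ioi
    ((hint 0).mono_set Ioc_subset_Ioi_self) (hint t₀), hhead, htail]
  simp only [t₀]
  field_simp
  ring

/-- bound on the gap between the maximum and the mean. If `u ≤ M` on `B` and
`λ({x ∈ B : u(x) ≤ M − s})/λ(B) ≤ C e^{−δs}` for all `s > 0` (with `C ≥ 1`, `δ > 0`),
then `M − u_B ≤ (1 + log C)/δ`. -/
theorem stmt_12 {X : Type*} [MeasurableSpace X] (lam : Measure X)
    (B : Set X) (hB : MeasurableSet B) (hpos : 0 < lam B) (hfin : lam B < ⊤)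
    (u : X → ℝ) (hu : IntegrableOn u B lam)
    (M : ℝ) (hM : ∀ x ∈ B, u x ≤ M)
    (C δ : ℝ) (hC : 1 ≤ C) (hδ : 0 < δ)
    (hdecay : ∀ s : ℝ, 0 < s →
      (lam (B ∩ {x | u x ≤ M - s})).toReal / (lam B).toReal ≤ C * Real.exp (-δ * s)) :
    M - (1 / (lam B).toReal) * ∫ x in B, u x ∂lam ≤ (1 + Real.log C) / δ := by
  have := cond_isProbabilityMeasure_of_finite hpos.ne' hfin.ne
  have hu' : Integrable u lam[|B] := hu.smul_measure (ENNReal.inv_ne_top.2 hpos.ne')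
  have hmean : ∫ x, u x ∂lam[|B] = 1 / (lam B).toReal * ∫ x in B, u x ∂lam := by
    rw [ProbabilityTheory.cond, integral_smul_measure, ENNReal.toReal_inv, smul_eq_mul, one_div]
  have hgap : 0 ≤ᵐ[lam[|B]] fun x ↦ M - u x := by
    filter_upwards [ae_cond_mem hB] with x hx
    exact sub_nonneg.2 (hM x hx)
  have htail : ∀ t > 0, lam[|B].real {x | t < M - u x} ≤ min 1 (C * exp (-δ * t)) := by
    intro t ht
    refine le_min measureReal_le_one ?_
    calc lam[|B].real {x | t < M - u x}
        ≤ lam[|B].real {x | u x ≤ M - t} := measureReal_mono fun x (hx : t < M - u x) ↦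
          show u x ≤ M - t by linarith
      _ = (lam (B ∩ {x | u x ≤ M - t})).toReal / (lam B).toReal := by
          rw [measureReal_def, cond_apply hB, ENNReal.toReal_mul, ENNReal.toReal_inv,
            inv_mul_eq_div]
      _ ≤ C * exp (-δ * t) := hdecay t ht
  have hbound := integral_le_setIntegral_Ioi_of_meas_lt_le (f := fun x ↦ M - u x)
    ((integrable_const M).sub hu') hgap (integrableOn_Ioi_min_one_mul_exp (by linarith) hδ 0)
    htail
  rwa [integral_sub (integrable_const M) hu', integral_const, probReal_univ, one_smul, hmean,
    integral_Ioi_min_one_mul_exp hC hδ] at hbound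
end
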